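/- arXiv:2509.05571 — 2 statements merged into one kernel-verified Lean document; each statement's English description precedes it below -/
import Mathlib

section
/- Let n ≥ 2, let d_1, …, d_n be unit vectors in ℂ^m, and let ψ be a unit vector in ℂ^n (a pure input state of the particle, without quantum memory). Set ρ_A = ψψ^* and q_i = |ψ_i|². Then (P_s(q) − 1/n)² + V(ρ̃_A)² ≤ (1 − 1/n)². -/
/-!
For a POVM `E` put `y i j = Re ⟨d j, E i d j⟩`; then `∑ i, y i j = 1`, and symmetrizing in
`i ↔ j` writes `2 (n P - 1)` as a sum over `i ≠ j` of `q i y i i - q j y j j` computed for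
`X = E i - E j` in place of `E i`, where `-1 ≤ X ≤ 1`. Cauchy–Schwarz for the forms of `1 ± X`
bounds each such term by the Helstrom quantity `√((q i + q j)² - 4 q i q j |⟨d i, d j⟩|²)`.
A second Cauchy–Schwarz over the pairs, with weights `q i + q j` of total `2 (n - 1)`, bounds
the square of the sum of these quantities by `2 (n - 1) (2 (n - 1) - 4 ∑ |⟨d j, d i⟩|² q i q j)`,
and for the pure state `ψ ψ*` that last sum is `n² V² / (2 (n - 1))`. Finally `P ≥ 1 / n`
because some `q i ≥ 1 / n`.
-/

open Matrix ComplexOrder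

noncomputable section

/-- Inner product ⟨a, b⟩ = ∑ i, conj (a i) * b i on a finite-dimensional complex space. -/
def ip {k : Type*} [Fintype k] (a b : k → ℂ) : ℂ := ∑ i, star (a i) * b i

/-- The optimal success probability of minimum-error discrimination of the detector
states `d i` with prior probabilities `q i`: the supremum over all POVMs
`Pov` (positive semidefinite matrices summing to the identity) of
`∑ i, q i * ⟨d i, Pov i (d i)⟩`. -/
def Ps {m n : ℕ} (d : Fin n → Fin m → ℂ) (q : Fin n → ℝ) : ℝ :=
  sSup { x : ℝ | ∃ Pov : Fin n → Matrix (Fin m) (Fin m) ℂ,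
    (∀ i, (Pov i).PosSemidef) ∧ (∑ i, Pov i) = 1 ∧
    x = ∑ i, q i * (ip (d i) ((Pov i) *ᵥ (d i))).re }

/-- The visibility `V(ρ̃_A) = √( (2(n−1)/n²) ∑_{i≠k} |⟨d_k, d_i⟩|² |(ρ_A)_{ik}|² )`. -/
def Vis {m n : ℕ} (d : Fin n → Fin m → ℂ) (ρ : Matrix (Fin n) (Fin n) ℂ) : ℝ :=
  Real.sqrt ((2 * ((n : ℝ) - 1) / (n : ℝ) ^ 2) *
    ∑ i, ∑ k, if i = k then 0 else ‖ip (d k) (d i)‖ ^ 2 * ‖ρ i k‖ ^ 2)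

/-- The post-interaction detector state `ρ̃_D = ∑ i, q i • d i (d i)^*`. -/
def detState {m n : ℕ} (d : Fin n → Fin m → ℂ) (q : Fin n → ℝ) :
    Matrix (Fin m) (Fin m) ℂ :=
  ∑ i, (q i : ℂ) • vecMulVec (d i) (star (d i))

/-- The post-interaction particle state `(ρ̃_A)_{ik} = ⟨d_k, d_i⟩ (ρ_A)_{ik}`. -/
def post {m n : ℕ} (d : Fin n → Fin m → ℂ) (ρ : Matrix (Fin n) (Fin n) ℂ) :
    Matrix (Fin n) (Fin n) ℂ :=
  Matrix.of fun i k => ip (d k) (d i) * ρ i k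

/-- The purity `Tr(ρ²)` (as a real number). -/
def purity {k : Type*} [Fintype k] (ρ : Matrix k k ℂ) : ℝ := ((ρ * ρ).trace).re

open Finset

section InnerProduct

variable {k : Type*} [Fintype k]

lemma ip_eq_dotProduct (a b : k → ℂ) : ip a b = star a ⬝ᵥ b := by
  simp [ip, dotProduct]

lemma ip_self (a : k → ℂ) : ip a a = ((∑ i, ‖a i‖ ^ 2 : ℝ) : ℂ) := by
  simp [ip, Complex.conj_mul']

lemma norm_ip_comm (a b : k → ℂ) : ‖ip a b‖ = ‖ip b a‖ := by
  rw [← norm_star, ip, ip, star_sum]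
  simp [mul_comm]

lemma ip_add_right (a b c : k → ℂ) : ip a (b + c) = ip a b + ip a c := by
  simp [ip_eq_dotProduct, dotProduct_add]

lemma ip_sub_right (a b c : k → ℂ) : ip a (b - c) = ip a b - ip a c := by
  simp [ip_eq_dotProduct, dotProduct_sub]

lemma ip_sum_right {α : Type*} (s : Finset α) (a : k → ℂ) (b : α → k → ℂ) :
    ip a (∑ j ∈ s, b j) = ∑ j ∈ s, ip a (b j) := by
  simp [ip_eq_dotProduct, dotProduct_sum]

lemma Matrix.PosSemidef.re_ip_mulVec_nonneg {M : Matrix k k ℂ} (hM : M.PosSemidef)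
    (u : k → ℂ) : 0 ≤ (ip u (M *ᵥ u)).re := by
  rw [ip_eq_dotProduct]
  exact hM.re_dotProduct_nonneg u

lemma Matrix.PosSemidef.norm_ip_mulVec_sq_le {M : Matrix k k ℂ} (hM : M.PosSemidef)
    (u v : k → ℂ) :
    ‖ip u (M *ᵥ v)‖ ^ 2 ≤ (ip u (M *ᵥ u)).re * (ip v (M *ᵥ v)).re := by
  let _ := M.toSeminormedAddCommGroup hM
  let _ := M.toInnerProductSpace hM
  have hinner : ∀ x y : k → ℂ, (inner ℂ x y : ℂ) = ip x (M *ᵥ y) := fun x y => by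
    rw [ip_eq_dotProduct, dotProduct_comm]
    rfl
  have h := inner_mul_inner_self_le (𝕜 := ℂ) u v
  rwa [norm_inner_symm v u, ← sq, hinner, hinner, hinner] at h

lemma norm_ip_sq_le [DecidableEq k] (u v : k → ℂ) :
    ‖ip u v‖ ^ 2 ≤ (ip u u).re * (ip v v).re := by
  simpa using PosSemidef.one.norm_ip_mulVec_sq_le u v

end InnerProduct

section Helstrom

/-- The trace norm of `p uu* - r vv*` for unit vectors `u`, `v` with `|⟨u, v⟩| = c`. -/
def helstrom (p r c : ℝ) : ℝ := √((p + r) ^ 2 - 4 * p * r * c ^ 2)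

lemma mul_sub_mul_sq_add_mul_sq_le {p r x y A B : ℝ} (hp : 0 ≤ p) (hr : 0 ≤ r)
    (hA : 0 ≤ A) (hB : 0 ≤ B) (hx₁ : 0 ≤ 1 - x) (hx₂ : 0 ≤ 1 + x)
    (hy₁ : 0 ≤ 1 - y) (hy₂ : 0 ≤ 1 + y)
    (hA2 : A ^ 2 ≤ (1 - x) * (1 - y)) (hB2 : B ^ 2 ≤ (1 + x) * (1 + y)) :
    (p * x - r * y) ^ 2 + p * r * (A + B) ^ 2 ≤ (p + r) ^ 2 := by
  have hpr : 0 ≤ p * r := mul_nonneg hp hr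
  -- AM-GM: `2 p r A B ≤ p² (1 - x²) + r² (1 - y²)`, compared after squaring.
  have hAB : 2 * (p * r) * (A * B) ≤ p ^ 2 * (1 - x ^ 2) + r ^ 2 * (1 - y ^ 2) := by
    have hX : 0 ≤ p ^ 2 * (1 - x ^ 2) :=
      mul_nonneg (sq_nonneg p) (by nlinarith [mul_nonneg hx₁ hx₂])
    have hY : 0 ≤ r ^ 2 * (1 - y ^ 2) :=
      mul_nonneg (sq_nonneg r) (by nlinarith [mul_nonneg hy₁ hy₂])
    have hAB2 : (A * B) ^ 2 ≤ (1 - x ^ 2) * (1 - y ^ 2) := by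
      calc (A * B) ^ 2 = A ^ 2 * B ^ 2 := by ring
        _ ≤ ((1 - x) * (1 - y)) * ((1 + x) * (1 + y)) :=
          mul_le_mul hA2 hB2 (sq_nonneg B) (mul_nonneg hx₁ hy₁)
        _ = (1 - x ^ 2) * (1 - y ^ 2) := by ring
    refine (pow_le_pow_iff_left₀ (by positivity) (by positivity) two_ne_zero).mp ?_
    nlinarith [sq_nonneg (p ^ 2 * (1 - x ^ 2) - r ^ 2 * (1 - y ^ 2)),
      mul_le_mul_of_nonneg_left hAB2 (sq_nonneg (2 * (p * r)))]
  nlinarith [mul_le_mul_of_nonneg_left hA2 hpr, mul_le_mul_of_nonneg_left hB2 hpr]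

variable {k : Type*} [Fintype k] [DecidableEq k]

lemma re_ip_mulVec_sub_le_helstrom {X : Matrix k k ℂ} (hX₁ : (1 - X).PosSemidef)
    (hX₂ : (1 + X).PosSemidef) {u v : k → ℂ} (hu : ip u u = 1) (hv : ip v v = 1)
    {p r : ℝ} (hp : 0 ≤ p) (hr : 0 ≤ r) :
    p * (ip u (X *ᵥ u)).re - r * (ip v (X *ᵥ v)).re ≤ helstrom p r ‖ip u v‖ := by
  have hsub : ∀ a b : k → ℂ, ip a ((1 - X) *ᵥ b) = ip a b - ip a (X *ᵥ b) := fun a b => by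
    rw [sub_mulVec, one_mulVec, ip_sub_right]
  have hadd : ∀ a b : k → ℂ, ip a ((1 + X) *ᵥ b) = ip a b + ip a (X *ᵥ b) := fun a b => by
    rw [add_mulVec, one_mulVec, ip_add_right]
  set x := (ip u (X *ᵥ u)).re
  set y := (ip v (X *ᵥ v)).re
  set t := ip u v
  set z := ip u (X *ᵥ v)
  have hx₁ : 0 ≤ 1 - x := by simpa [hsub, hu] using hX₁.re_ip_mulVec_nonneg u
  have hx₂ : 0 ≤ 1 + x := by simpa [hadd, hu] using hX₂.re_ip_mulVec_nonneg u
  have hy₁ : 0 ≤ 1 - y := by simpa [hsub, hv] using hX₁.re_ip_mulVec_nonneg v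
  have hy₂ : 0 ≤ 1 + y := by simpa [hadd, hv] using hX₂.re_ip_mulVec_nonneg v
  have hA : ‖t - z‖ ^ 2 ≤ (1 - x) * (1 - y) := by
    simpa [hsub, hu, hv] using hX₁.norm_ip_mulVec_sq_le u v
  have hB : ‖t + z‖ ^ 2 ≤ (1 + x) * (1 + y) := by
    simpa [hadd, hu, hv] using hX₂.norm_ip_mulVec_sq_le u v
  have ht : 2 * ‖t‖ ≤ ‖t - z‖ + ‖t + z‖ := by
    calc 2 * ‖t‖ = ‖(t - z) + (t + z)‖ := by rw [sub_add_add_cancel, ← two_mul]; simp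
      _ ≤ ‖t - z‖ + ‖t + z‖ := norm_add_le _ _
  have key := mul_sub_mul_sq_add_mul_sq_le hp hr (norm_nonneg _) (norm_nonneg _)
    hx₁ hx₂ hy₁ hy₂ hA hB
  refine (le_abs_self _).trans (Real.abs_le_sqrt ?_)
  nlinarith [mul_le_mul_of_nonneg_left (pow_le_pow_left₀ (by positivity) ht 2) (mul_nonneg hp hr)]

end Helstrom

section Sums

variable {ι : Type*} [Fintype ι] {q : ι → ℝ}

lemma card_pos_of_sum_eq_one (hq : ∑ i, q i = 1) : 0 < Fintype.card ι := by
  rcases isEmpty_or_nonempty ι with h | h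
  · simp at hq
  · exact Fintype.card_pos

variable [DecidableEq ι]

lemma sum_sum_ite_eq_sum_offDiag {M : Type*} [AddCommMonoid M] (F : ι → ι → M) :
    ∑ i, ∑ j, (if i = j then 0 else F i j) = ∑ x ∈ univ.offDiag, F x.1 x.2 := by
  rw [← sum_product', univ_product_univ]
  refine (sum_subset (subset_univ _) fun x _ hx => ?_).symm.trans (sum_congr rfl fun x hx => ?_)
  · simp_all
  · simp_all

lemma sum_ite_eq_zero_else_eq_sub (g : ι → ℝ) (i : ι) :
    ∑ j, (if i = j then 0 else g j) = ∑ j, g j - g i := by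
  rw [← sum_erase_eq_sub (mem_univ i), ← filter_ne, sum_filter]
  simp only [ite_not, ne_eq]

lemma add_le_one_of_ne (hq₀ : ∀ i, 0 ≤ q i) (hq : ∑ i, q i = 1) {i j : ι} (hij : i ≠ j) :
    q i + q j ≤ 1 := by
  rw [← sum_pair hij, ← hq]
  exact sum_le_sum_of_subset_of_nonneg (subset_univ _) fun l _ _ => hq₀ l

lemma sum_offDiag_add (hq : ∑ i, q i = 1) :
    ∑ x ∈ univ.offDiag, (q x.1 + q x.2) = 2 * (Fintype.card ι - 1) := by
  rw [← sum_sum_ite_eq_sum_offDiag (fun i j => q i + q j)]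
  simp only [sum_ite_eq_zero_else_eq_sub, sum_add_distrib, sum_const, card_univ, nsmul_eq_mul, hq,
    sum_sub_distrib, ← mul_sum]
  ring

-- Symmetrization of `n P - 1 = ∑ i, ∑ j, (q i y i i - q j y i j)` under `i ↔ j`.
lemma two_mul_card_mul_sum_sub_one_eq {y : ι → ι → ℝ} (hq : ∑ i, q i = 1)
    (hcol : ∀ j, ∑ i, y i j = 1) :
    2 * (Fintype.card ι * ∑ i, q i * y i i - 1) = ∑ x ∈ univ.offDiag,
      (q x.1 * (y x.1 x.1 - y x.2 x.1) - q x.2 * (y x.1 x.2 - y x.2 x.2)) := by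
  have hdiag : ∀ i j, (if i = j then 0 else q i * (y i i - y j i) - q j * (y i j - y j j)) =
      q i * (y i i - y j i) - q j * (y i j - y j j) := fun i j => by
    split_ifs with h
    · subst h; ring
    · rfl
  have hcross : ∑ i, ∑ j, q j * y i j = 1 := by
    rw [sum_comm]
    simp only [← mul_sum, hcol, mul_one, hq]
  rw [← sum_sum_ite_eq_sum_offDiag (fun i j => q i * (y i i - y j i) - q j * (y i j - y j j))]
  simp only [hdiag]
  simp only [mul_sub, sum_sub_distrib, sum_const, card_univ, nsmul_eq_mul, ← mul_sum,
    hcol, mul_one, hq, hcross]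
  ring

end Sums

section POVM

variable {ι k : Type*} [Fintype ι] [DecidableEq ι] [DecidableEq k] {E : ι → Matrix k k ℂ}

lemma posSemidef_one_add_sub (hE : ∀ i, (E i).PosSemidef) (hsum : ∑ i, E i = 1) (i j : ι) :
    (1 + (E i - E j)).PosSemidef := by
  have h : 1 + (E i - E j) = E i + ∑ l ∈ univ.erase j, E l := by
    rw [← hsum, ← add_sum_erase univ E (mem_univ j)]
    abel
  rw [h]
  exact (hE i).add (posSemidef_sum _ fun l _ => hE l)

lemma sum_mul_re_ip_mulVec_le [Fintype k] {d : ι → k → ℂ} (hd : ∀ i, ip (d i) (d i) = 1)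
    {q : ι → ℝ} (hq₀ : ∀ i, 0 ≤ q i) (hq : ∑ i, q i = 1) (hE : ∀ i, (E i).PosSemidef)
    (hsum : ∑ i, E i = 1) :
    ∑ i, q i * (ip (d i) (E i *ᵥ d i)).re ≤ 1 / Fintype.card ι +
      (∑ x ∈ univ.offDiag, helstrom (q x.1) (q x.2) ‖ip (d x.2) (d x.1)‖) /
        (2 * Fintype.card ι) := by
  have hN : (0 : ℝ) < Fintype.card ι := by exact_mod_cast card_pos_of_sum_eq_one hq
  rw [div_add_div _ _ hN.ne' (by positivity), le_div_iff₀ (by positivity)]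
  suffices h : 2 * (Fintype.card ι * ∑ i, q i * (ip (d i) (E i *ᵥ d i)).re - 1) ≤
      ∑ x ∈ univ.offDiag, helstrom (q x.1) (q x.2) ‖ip (d x.2) (d x.1)‖ by
    nlinarith
  set y : ι → ι → ℝ := fun i j => (ip (d j) (E i *ᵥ d j)).re
  have hcol : ∀ j, ∑ i, y i j = 1 := fun j => by
    simp only [y, ← Complex.re_sum, ← ip_sum_right, ← sum_mulVec, hsum, one_mulVec, hd,
      Complex.one_re]
  rw [two_mul_card_mul_sum_sub_one_eq hq hcol]
  refine sum_le_sum fun x hx => ?_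
  have h := re_ip_mulVec_sub_le_helstrom (by
    convert posSemidef_one_add_sub hE hsum x.2 x.1 using 1; abel)
    (posSemidef_one_add_sub hE hsum x.1 x.2) (hd x.1) (hd x.2) (hq₀ x.1) (hq₀ x.2)
  simpa [y, sub_mulVec, ip_sub_right, norm_ip_comm (d x.1)] using h

end POVM

section SuccessProbability

variable {m n : ℕ} {d : Fin n → Fin m → ℂ} {q : Fin n → ℝ}

lemma Ps_le (hd : ∀ i, ip (d i) (d i) = 1) (hq₀ : ∀ i, 0 ≤ q i) (hq : ∑ i, q i = 1) :
    Ps d q ≤ 1 / n +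
      (∑ x ∈ univ.offDiag, helstrom (q x.1) (q x.2) ‖ip (d x.2) (d x.1)‖) / (2 * n) := by
  refine Real.sSup_le ?_ ?_
  · rintro _ ⟨E, hE, hsum, rfl⟩
    simpa using sum_mul_re_ip_mulVec_le hd hq₀ hq hE hsum
  · have hS : 0 ≤ ∑ x ∈ univ.offDiag, helstrom (q x.1) (q x.2) ‖ip (d x.2) (d x.1)‖ :=
      sum_nonneg fun _ _ => Real.sqrt_nonneg _
    positivity

lemma le_Ps (hd : ∀ i, ip (d i) (d i) = 1) (hq₀ : ∀ i, 0 ≤ q i) (hq : ∑ i, q i = 1)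
    (i : Fin n) : q i ≤ Ps d q := by
  refine le_csSup ⟨1 / n + (∑ x ∈ univ.offDiag,
    helstrom (q x.1) (q x.2) ‖ip (d x.2) (d x.1)‖) / (2 * n), ?_⟩
    ⟨fun j => if j = i then 1 else 0, fun j => ?_, by simp, ?_⟩
  · rintro _ ⟨E, hE, hsum, rfl⟩
    simpa using sum_mul_re_ip_mulVec_le hd hq₀ hq hE hsum
  · dsimp only
    split_ifs
    exacts [PosSemidef.one, PosSemidef.zero]
  · rw [sum_eq_single i (fun j _ hj => by simp [hj, ip]) (by simp)]
    simp [hd]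

lemma inv_le_Ps (hd : ∀ i, ip (d i) (d i) = 1) (hq₀ : ∀ i, 0 ≤ q i) (hq : ∑ i, q i = 1) :
    1 / (n : ℝ) ≤ Ps d q := by
  have hn : 0 < n := by simpa using card_pos_of_sum_eq_one hq
  obtain ⟨i, -, hi⟩ := exists_le_of_sum_le (univ_nonempty_iff.mpr ⟨⟨0, hn⟩⟩)
    (f := fun _ => 1 / (n : ℝ)) (g := q) (by simp [hq, hn.ne'])
  exact hi.trans (le_Ps hd hq₀ hq i)

end SuccessProbability

section Algebra

lemma helstrom_sq_le_mul {p r c : ℝ} (hp : 0 ≤ p) (hr : 0 ≤ r) (hpr : p + r ≤ 1)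
    (hc : c ^ 2 ≤ 1) : helstrom p r c ^ 2 ≤ (p + r) * (p + r - 4 * p * r * c ^ 2) := by
  have h4 : 0 ≤ 4 * p * r * c ^ 2 := by positivity
  rw [helstrom, Real.sq_sqrt (by nlinarith [sq_nonneg (p - r), mul_nonneg hp hr])]
  nlinarith

lemma four_mul_mul_sq_le_add {p r c : ℝ} (hp : 0 ≤ p) (hr : 0 ≤ r) (hpr : p + r ≤ 1)
    (hc : c ^ 2 ≤ 1) : 4 * p * r * c ^ 2 ≤ p + r := by
  have hpr₀ : 0 ≤ p * r := mul_nonneg hp hr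
  calc 4 * p * r * c ^ 2 ≤ 4 * p * r := by nlinarith [mul_le_mul_of_nonneg_left hc hpr₀]
    _ ≤ (p + r) ^ 2 := by nlinarith [sq_nonneg (p - r)]
    _ ≤ p + r := by nlinarith

variable {ι : Type*} [Fintype ι] [DecidableEq ι] {q : ι → ℝ}

lemma sq_sum_offDiag_helstrom_le (hq₀ : ∀ i, 0 ≤ q i) (hq : ∑ i, q i = 1)
    {c : ι → ι → ℝ} (hc : ∀ i j, c i j ^ 2 ≤ 1) :
    (∑ x ∈ univ.offDiag, helstrom (q x.1) (q x.2) (c x.1 x.2)) ^ 2 ≤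
      2 * (Fintype.card ι - 1) * (2 * (Fintype.card ι - 1) -
        4 * ∑ x ∈ univ.offDiag, c x.1 x.2 ^ 2 * (q x.1 * q x.2)) := by
  have hpair : ∀ x ∈ univ.offDiag, q x.1 + q x.2 ≤ 1 := fun x hx =>
    add_le_one_of_ne hq₀ hq (mem_offDiag.1 hx).2.2
  -- Cauchy–Schwarz against the weights `q i + q j`, whose off-diagonal total is `2 (n - 1)`.
  have h := sum_sq_le_sum_mul_sum_of_sq_le_mul univ.offDiag
    (r := fun x => helstrom (q x.1) (q x.2) (c x.1 x.2)) (f := fun x => q x.1 + q x.2)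
    (g := fun x => q x.1 + q x.2 - 4 * q x.1 * q x.2 * c x.1 x.2 ^ 2)
    (fun x _ => add_nonneg (hq₀ x.1) (hq₀ x.2))
    (fun x hx =>
      sub_nonneg.2 (four_mul_mul_sq_le_add (hq₀ x.1) (hq₀ x.2) (hpair x hx) (hc x.1 x.2)))
    (fun x hx => helstrom_sq_le_mul (hq₀ x.1) (hq₀ x.2) (hpair x hx) (hc x.1 x.2))
  have hT : ∑ x ∈ univ.offDiag, 4 * q x.1 * q x.2 * c x.1 x.2 ^ 2 =
      4 * ∑ x ∈ univ.offDiag, c x.1 x.2 ^ 2 * (q x.1 * q x.2) := by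
    rw [mul_sum]
    exact sum_congr rfl fun _ _ => by ring
  rwa [sum_sub_distrib, sum_offDiag_add hq, hT] at h

end Algebra

lemma Vis_sq {m n : ℕ} (hn : 0 < n) (d : Fin n → Fin m → ℂ)
    (ρ : Matrix (Fin n) (Fin n) ℂ) : Vis d ρ ^ 2 = 2 * ((n : ℝ) - 1) / (n : ℝ) ^ 2 *
      ∑ x ∈ univ.offDiag, ‖ip (d x.2) (d x.1)‖ ^ 2 * ‖ρ x.1 x.2‖ ^ 2 := by
  have hn' : (1 : ℝ) ≤ n := by exact_mod_cast hn
  rw [Vis, sum_sum_ite_eq_sum_offDiag, Real.sq_sqrt]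
  exact mul_nonneg (by positivity) (sum_nonneg fun _ _ => by positivity)

lemma sq_sub_one_div_add_le {N P S T : ℝ} (hN : 0 < N) (hP₀ : 1 / N ≤ P)
    (hP₁ : P ≤ 1 / N + S / (2 * N)) (hS : S ^ 2 ≤ 2 * (N - 1) * (2 * (N - 1) - 4 * T)) :
    (P - 1 / N) ^ 2 + 2 * (N - 1) / N ^ 2 * T ≤ (1 - 1 / N) ^ 2 := by
  have hP : (P - 1 / N) ^ 2 ≤ (S / (2 * N)) ^ 2 :=
    pow_le_pow_left₀ (by linarith) (by linarith) 2
  calc (P - 1 / N) ^ 2 + 2 * (N - 1) / N ^ 2 * T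
      ≤ (S ^ 2 + 8 * (N - 1) * T) / (4 * N ^ 2) := by
        rw [div_pow, mul_pow] at hP
        have : 2 * (N - 1) / N ^ 2 * T = 8 * (N - 1) * T / (4 * N ^ 2) := by field_simp; ring
        rw [this, add_div]
        linarith
    _ ≤ 4 * (N - 1) ^ 2 / (4 * N ^ 2) := by gcongr; linarith
    _ = (1 - 1 / N) ^ 2 := by field_simp

theorem stmt6_general (n m : ℕ) (d : Fin n → Fin m → ℂ)
    (hd : ∀ i, ip (d i) (d i) = 1)
    (ψ : Fin n → ℂ) (hψ : ip ψ ψ = 1)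
    (ρA : Matrix (Fin n) (Fin n) ℂ) (hρA : ρA = vecMulVec ψ (star ψ))
    (q : Fin n → ℝ) (hq : ∀ i, q i = ‖ψ i‖ ^ 2) :
    (Ps d q - 1 / n) ^ 2 + (Vis d ρA) ^ 2 ≤ (1 - 1 / (n : ℝ)) ^ 2 := by
  have hq₀ : ∀ i, 0 ≤ q i := fun i => hq i ▸ sq_nonneg _
  have hq₁ : ∑ i, q i = 1 := by
    simpa [← hq] using congrArg Complex.re ((ip_self ψ).symm.trans hψ)
  have hpos : 0 < n := by simpa using card_pos_of_sum_eq_one hq₁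
  have hρ : ∀ i k, ‖ρA i k‖ ^ 2 = q i * q k := by
    simp [hρA, vecMulVec_apply, mul_pow, hq]
  have hc : ∀ i k, ‖ip (d k) (d i)‖ ^ 2 ≤ 1 := fun i k => by
    simpa [hd] using norm_ip_sq_le (d k) (d i)
  rw [Vis_sq hpos]
  simp only [hρ]
  refine sq_sub_one_div_add_le (by exact_mod_cast hpos) (inv_le_Ps hd hq₀ hq₁)
    (Ps_le hd hq₀ hq₁) ?_
  simpa using sq_sum_offDiag_helstrom_le hq₀ hq₁ (c := fun i k => ‖ip (d k) (d i)‖) hc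

/-- wave-particle duality for a pure input state of the particle (without
quantum memory) in the `n`-path interferometer with detectors. -/
theorem stmt6 (n m : ℕ) (hn : 2 ≤ n) (d : Fin n → Fin m → ℂ)
    (hd : ∀ i, ip (d i) (d i) = 1)
    (ψ : Fin n → ℂ) (hψ : ip ψ ψ = 1)
    (ρA : Matrix (Fin n) (Fin n) ℂ) (hρA : ρA = vecMulVec ψ (star ψ))
    (q : Fin n → ℝ) (hq : ∀ i, q i = ‖ψ i‖ ^ 2) :
    (Ps d q - 1 / n) ^ 2 + (Vis d ρA) ^ 2 ≤ (1 - 1 / (n : ℝ)) ^ 2 :=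
  stmt6_general n m d hd ψ hψ ρA hρA q hq
end
end

section
/- Let a, b be unit vectors in ℂ^m and let q_1, q_2 ≥ 0. The Hermitian matrix T = q_1 a a^* − q_2 b b^* has trace norm (the sum of the absolute values of its eigenvalues) equal to √( (q_1 + q_2)² − 4 q_1 q_2 |⟨a, b⟩|² ). -/
open Matrix ComplexOrder

noncomputable section

/-- The matrix `T = q₁ a a^* − q₂ b b^*` is Hermitian. -/
lemma herm {m : ℕ} (a b : Fin m → ℂ) (q1 q2 : ℝ) :
    ((q1 : ℂ) • vecMulVec a (star a) - (q2 : ℂ) • vecMulVec b (star b)).IsHermitian := by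
  have h : ∀ (c : ℝ) (v : Fin m → ℂ), ((c : ℂ) • vecMulVec v (star v)).IsHermitian := by
    intro c v
    ext i j
    simp [Matrix.conjTranspose_apply, Matrix.vecMulVec_apply, mul_comm, mul_left_comm,
      mul_assoc]
  exact (h q1 a).sub (h q2 b)

/-! The rank-two matrix `q₁ a a^* − q₂ b b^*` is nonpositive on `a^⊥` and nonnegative on `b^⊥`,
so it has at most one positive and at most one negative eigenvalue. For such a spectrum
`(∑ |λᵢ|)² = 2 ∑ λᵢ² − (∑ λᵢ)²`, and the two power sums are the traces of `T` and `T²`, namely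
`q₁ − q₂` and `q₁² + q₂² − 2 q₁ q₂ |⟨a, b⟩|²`. -/

theorem sq_sum_abs_add_sq_sum_eq {ι : Type*} [Fintype ι] (f : ι → ℝ)
    (hf : ∀ i j, i ≠ j → f i * f j ≤ 0) :
    (∑ i, |f i|) ^ 2 + (∑ i, f i) ^ 2 = 2 * ∑ i, f i ^ 2 := by
  classical
  have hpair : ∀ i j, |f i| * |f j| + f i * f j = if i = j then 2 * f i ^ 2 else 0 := by
    intro i j
    split_ifs with hij
    · subst hij
      rw [← abs_mul, abs_mul_self]
      ring
    · rw [← abs_mul, abs_of_nonpos (hf i j hij)]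
      ring
  calc (∑ i, |f i|) ^ 2 + (∑ i, f i) ^ 2 = ∑ i, ∑ j, (|f i| * |f j| + f i * f j) := by
        simp only [sq, Finset.sum_mul_sum, ← Finset.sum_add_distrib]
    _ = 2 * ∑ i, f i ^ 2 := by
        simp only [hpair, Finset.sum_ite_eq, Finset.mem_univ, if_true, Finset.mul_sum]

section Spectrum

variable {𝕜 : Type*} [RCLike 𝕜] {n : Type*} [Fintype n]

/-- If `u` spans a positive eigenline, an eigenvector `w ⊥ u` with positive eigenvalue would
make the form positive on a vector of `span {u, w} ∩ a^⊥`. -/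
theorem Matrix.nonpos_of_orthogonal_eigenvectors {A : Matrix n n 𝕜} {a u w : n → 𝕜} {s t : ℝ}
    (hA : ∀ x, star a ⬝ᵥ x = 0 → star x ⬝ᵥ (A *ᵥ x) ≤ 0)
    (hu : A *ᵥ u = s • u) (hw : A *ᵥ w = t • w)
    (huu : star u ⬝ᵥ u = 1) (hww : star w ⬝ᵥ w = 1) (huw : star u ⬝ᵥ w = 0)
    (hs : 0 < s) : t ≤ 0 := by
  set α := star a ⬝ᵥ u
  set β := star a ⬝ᵥ w
  by_cases hα : α = 0
  · have hu_form := hA u hα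
    rw [hu, dotProduct_smul, huu, RCLike.real_smul_eq_coe_mul, mul_one,
      RCLike.ofReal_nonpos] at hu_form
    linarith
  have hwu : star w ⬝ᵥ u = 0 := by rw [star_dotProduct, huw, star_zero]
  let x := β • u - α • w
  have hx : star a ⬝ᵥ x = 0 := by
    simp only [x, dotProduct_sub, dotProduct_smul, smul_eq_mul]
    ring
  have hx_form : star x ⬝ᵥ (A *ᵥ x) = ((‖β‖ ^ 2 * s + ‖α‖ ^ 2 * t : ℝ) : 𝕜) := by
    simp only [x, mulVec_sub, mulVec_smul, hu, hw, star_sub, star_smul, sub_dotProduct,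
      dotProduct_sub, smul_dotProduct, dotProduct_smul, huu, hww, huw, hwu]
    simp only [RCLike.real_smul_eq_coe_mul, smul_eq_mul, RCLike.star_def]
    push_cast
    rw [← RCLike.conj_mul, ← RCLike.conj_mul]
    ring
  have hx_nonpos := hA x hx
  rw [hx_form, RCLike.ofReal_nonpos] at hx_nonpos
  have hα_pos : 0 < ‖α‖ ^ 2 := by positivity
  nlinarith [mul_nonneg (sq_nonneg ‖β‖) hs.le]

variable [DecidableEq n] {A : Matrix n n 𝕜}

theorem Matrix.IsHermitian.star_eigenvectorBasis_dotProduct (hA : A.IsHermitian) (i j : n) :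
    star ⇑(hA.eigenvectorBasis i) ⬝ᵥ ⇑(hA.eigenvectorBasis j) = if i = j then 1 else 0 := by
  rw [dotProduct_comm, ← EuclideanSpace.inner_eq_star_dotProduct]
  exact orthonormal_iff_ite.mp hA.eigenvectorBasis.orthonormal i j

theorem Matrix.IsHermitian.eigenvalues_mul_nonpos (hA : A.IsHermitian) {a b : n → 𝕜}
    (ha : ∀ x, star a ⬝ᵥ x = 0 → star x ⬝ᵥ (A *ᵥ x) ≤ 0)
    (hb : ∀ x, star b ⬝ᵥ x = 0 → 0 ≤ star x ⬝ᵥ (A *ᵥ x)) {i j : n} (hij : i ≠ j) :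
    hA.eigenvalues i * hA.eigenvalues j ≤ 0 := by
  have horth := hA.star_eigenvectorBasis_dotProduct
  by_contra! hpos
  rcases pos_and_pos_or_neg_and_neg_of_mul_pos hpos with ⟨hi, hj⟩ | ⟨hi, hj⟩
  · refine hj.not_ge (nonpos_of_orthogonal_eigenvectors ha (hA.mulVec_eigenvectorBasis i)
      (hA.mulVec_eigenvectorBasis j) ?_ ?_ ?_ hi) <;> simp [horth, hij]
  · have hb_neg : ∀ x, star b ⬝ᵥ x = 0 → star x ⬝ᵥ (-A *ᵥ x) ≤ 0 := fun x hx => by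
      rw [neg_mulVec, dotProduct_neg, neg_nonpos]
      exact hb x hx
    have hneg_eig : ∀ k, -A *ᵥ ⇑(hA.eigenvectorBasis k) =
        (-hA.eigenvalues k) • ⇑(hA.eigenvectorBasis k) := fun k => by
      rw [neg_mulVec, hA.mulVec_eigenvectorBasis, neg_smul]
    have := nonpos_of_orthogonal_eigenvectors hb_neg (hneg_eig i) (hneg_eig j)
      (by simp [horth]) (by simp [horth]) (by simp [horth, hij]) (neg_pos.mpr hi)
    linarith

theorem Matrix.IsHermitian.trace_mul_self (hA : A.IsHermitian) :
    (A * A).trace = ∑ i, (hA.eigenvalues i : 𝕜) ^ 2 := by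
  conv_lhs => rw [hA.spectral_theorem, ← map_mul, Unitary.conjStarAlgAut_apply,
    trace_mul_cycle, Unitary.coe_star_mul_self, one_mul, diagonal_mul_diagonal, trace_diagonal]
  simp [sq]

end Spectrum

section RankTwo

variable {n : Type*} [Fintype n] (a b : n → ℂ) (q1 q2 : ℝ)

theorem star_dotProduct_rankTwo_mulVec (x : n → ℂ) :
    star x ⬝ᵥ (((q1 : ℂ) • vecMulVec a (star a) - (q2 : ℂ) • vecMulVec b (star b)) *ᵥ x) =
      q1 * (star (star a ⬝ᵥ x) * (star a ⬝ᵥ x)) -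
        q2 * (star (star b ⬝ᵥ x) * (star b ⬝ᵥ x)) := by
  simp only [sub_mulVec, smul_mulVec, vecMulVec_mulVec, dotProduct_sub, dotProduct_smul,
    op_smul_eq_smul, smul_eq_mul]
  rw [star_dotProduct x a, star_dotProduct x b]
  ring

variable {a b q1 q2}

theorem star_dotProduct_rankTwo_mulVec_nonpos (hq2 : 0 ≤ q2) {x : n → ℂ}
    (hx : star a ⬝ᵥ x = 0) :
    star x ⬝ᵥ (((q1 : ℂ) • vecMulVec a (star a) - (q2 : ℂ) • vecMulVec b (star b)) *ᵥ x) ≤ 0 := by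
  rw [star_dotProduct_rankTwo_mulVec, hx, star_zero, zero_mul, mul_zero, zero_sub, neg_nonpos]
  exact mul_nonneg (Complex.zero_le_real.mpr hq2) (star_mul_self_nonneg _)

theorem star_dotProduct_rankTwo_mulVec_nonneg (hq1 : 0 ≤ q1) {x : n → ℂ}
    (hx : star b ⬝ᵥ x = 0) :
    0 ≤ star x ⬝ᵥ (((q1 : ℂ) • vecMulVec a (star a) - (q2 : ℂ) • vecMulVec b (star b)) *ᵥ x) := by
  rw [star_dotProduct_rankTwo_mulVec, hx, star_zero, zero_mul, mul_zero, sub_zero]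
  exact mul_nonneg (Complex.zero_le_real.mpr hq1) (star_mul_self_nonneg _)

variable (q1 q2)

theorem trace_rankTwo (ha : star a ⬝ᵥ a = 1) (hb : star b ⬝ᵥ b = 1) :
    ((q1 : ℂ) • vecMulVec a (star a) - (q2 : ℂ) • vecMulVec b (star b)).trace = q1 - q2 := by
  rw [trace_sub, trace_smul, trace_smul, trace_vecMulVec, trace_vecMulVec, dotProduct_comm a,
    dotProduct_comm b, ha, hb, smul_eq_mul, smul_eq_mul, mul_one, mul_one]

theorem trace_rankTwo_mul_self (ha : star a ⬝ᵥ a = 1) (hb : star b ⬝ᵥ b = 1) :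
    (((q1 : ℂ) • vecMulVec a (star a) - (q2 : ℂ) • vecMulVec b (star b)) *
      ((q1 : ℂ) • vecMulVec a (star a) - (q2 : ℂ) • vecMulVec b (star b))).trace =
      (q1 : ℂ) ^ 2 + (q2 : ℂ) ^ 2 - 2 * q1 * q2 * ‖star a ⬝ᵥ b‖ ^ 2 := by
  have hc : (star a ⬝ᵥ b) * (star b ⬝ᵥ a) = (‖star a ⬝ᵥ b‖ : ℂ) ^ 2 := by
    rw [star_dotProduct b, Complex.star_def, Complex.mul_conj']
  simp only [sub_mul, mul_sub, smul_mul_smul, vecMulVec_mul_vecMulVec, trace_sub, trace_smul,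
    trace_vecMulVec, dotProduct_smul, smul_eq_mul]
  rw [dotProduct_comm a, dotProduct_comm a, dotProduct_comm b, dotProduct_comm b, ha, hb]
  linear_combination (-2 * q1 * q2 : ℂ) * hc

end RankTwo

theorem ip_eq_star_dotProduct {k : Type*} [Fintype k] (a b : k → ℂ) : ip a b = star a ⬝ᵥ b :=
  rfl

/-- the trace norm (sum of the absolute values of the eigenvalues) of the
Hermitian matrix `T = q₁ a a^* − q₂ b b^*` for unit vectors `a, b` equals
`√((q₁ + q₂)² − 4 q₁ q₂ |⟨a, b⟩|²)`. -/
theorem stmt15 (m : ℕ) (a b : Fin m → ℂ)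
    (ha : ip a a = 1) (hb : ip b b = 1)
    (q1 q2 : ℝ) (hq1 : 0 ≤ q1) (hq2 : 0 ≤ q2) :
    ∑ j, |(herm a b q1 q2).eigenvalues j| =
      Real.sqrt ((q1 + q2) ^ 2 - 4 * q1 * q2 * ‖ip a b‖ ^ 2) := by
  rw [ip_eq_star_dotProduct] at ha hb ⊢
  set hT := herm a b q1 q2
  have hmul : ∀ i j, i ≠ j → hT.eigenvalues i * hT.eigenvalues j ≤ 0 := fun i j =>
    hT.eigenvalues_mul_nonpos (fun _ => star_dotProduct_rankTwo_mulVec_nonpos hq2)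
      (fun _ => star_dotProduct_rankTwo_mulVec_nonneg hq1)
  have hsum : ∑ j, hT.eigenvalues j = q1 - q2 := by
    apply Complex.ofReal_injective
    push_cast
    exact hT.trace_eq_sum_eigenvalues.symm.trans (trace_rankTwo q1 q2 ha hb)
  have hsum_sq : ∑ j, hT.eigenvalues j ^ 2 =
      q1 ^ 2 + q2 ^ 2 - 2 * q1 * q2 * ‖star a ⬝ᵥ b‖ ^ 2 := by
    apply Complex.ofReal_injective
    push_cast
    exact hT.trace_mul_self.symm.trans (trace_rankTwo_mul_self q1 q2 ha hb)
  have hsq := sq_sum_abs_add_sq_sum_eq _ hmul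
  rw [hsum, hsum_sq] at hsq
  rw [show (q1 + q2) ^ 2 - 4 * q1 * q2 * ‖star a ⬝ᵥ b‖ ^ 2 = (∑ j, |hT.eigenvalues j|) ^ 2 by
    linarith, Real.sqrt_sq (Finset.sum_nonneg fun j _ => abs_nonneg _)]
end
end
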